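/- arXiv:2410.22260 — 6 statements merged into one kernel-verified Lean document; each statement's English description precedes it below -/
import Mathlib

section
/- If A is a strongly independent subset of a finite group G and B ⊆ A, then B is strongly independent. -/
def IsStronglyIndependent {G : Type*} [Group G] (A : Finset G) : Prop :=
  ∀ H : Subgroup G, (A : Set G) ⊆ H →
    ∀ C : Finset G, Subgroup.closure (C : Set G) = H → A.card ≤ C.card

theorem stronglyIndependent_of_subset {G : Type*} [Group G] [Finite G]
    (A B : Finset G) (hBA : B ⊆ A) (hA : IsStronglyIndependent A) :
    IsStronglyIndependent B := by
  intro H hBH C hC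
  classical
  set D : Finset G := C ∪ (A \ B) with hD
  have hAsub : (A : Set G) ⊆ Subgroup.closure (D : Set G) := by
    intro a ha
    by_cases hb : a ∈ B
    · have : a ∈ H := hBH hb
      rw [← hC] at this
      exact Subgroup.closure_mono (Finset.coe_subset.mpr Finset.subset_union_left) this
    · apply Subgroup.subset_closure
      simp only [hD, Finset.coe_union, Set.mem_union, Finset.mem_coe]
      right
      simp only [Finset.mem_sdiff]
      exact ⟨by exact_mod_cast ha, hb⟩
  have h1 : A.card ≤ D.card := hA _ hAsub D rfl
  have h2 : D.card ≤ C.card + (A \ B).card := Finset.card_union_le _ _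
  have h3 : (A \ B).card + B.card = A.card := Finset.card_sdiff_add_card_eq_card hBA
  omega
end

section
/- For a finite cyclic group C_n, the power graph of C_n is complete if and only if n is a prime power (or n = 1). -/
lemma mem_zpowers_of_orderOf_dvd {G : Type*} [Group G] [Fintype G] [IsCyclic G]
    [DecidableEq G] {x y : G} (h : orderOf x ∣ orderOf y) : x ∈ Subgroup.zpowers y := by
  classical
  have hn0 : 0 < orderOf y := orderOf_pos y
  have hle := IsCyclic.card_pow_eq_one_le (α := G) hn0
  -- zpowers y ⊆ {g | g ^ orderOf y = 1}, with card orderOf y ≥ card of the set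
  set S : Finset G := Finset.univ.filter fun g => g ^ orderOf y = 1 with hS
  have hsub : ((Subgroup.zpowers y : Subgroup G) : Set G).toFinset ⊆ S := by
    intro g hg
    simp only [Set.mem_toFinset, SetLike.mem_coe] at hg
    obtain ⟨k, rfl⟩ := Subgroup.mem_zpowers_iff.mp hg
    simp only [hS, Finset.mem_filter, Finset.mem_univ, true_and]
    rw [← zpow_natCast, ← zpow_mul, mul_comm, zpow_mul, zpow_natCast, pow_orderOf_eq_one,
      one_zpow]
  have hcard : ((Subgroup.zpowers y : Subgroup G) : Set G).toFinset.card = orderOf y := by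
    rw [Set.toFinset_card, ← Nat.card_eq_fintype_card]
    exact Nat.card_zpowers y
  have heq : ((Subgroup.zpowers y : Subgroup G) : Set G).toFinset = S := by
    apply Finset.eq_of_subset_of_card_le hsub
    calc S.card ≤ orderOf y := hle
    _ = _ := hcard.symm
  have hx : x ∈ S := by
    simp only [hS, Finset.mem_filter, Finset.mem_univ, true_and]
    exact orderOf_dvd_iff_pow_eq_one.mp h
  rw [← heq] at hx
  simpa using hx

theorem powerGraph_complete_iff_primePow {G : Type*} [Group G] [Finite G]
    [IsCyclic G] :
    (∀ x y : G, x ≠ y → x ∈ Subgroup.zpowers y ∨ y ∈ Subgroup.zpowers x) ↔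
      (IsPrimePow (Nat.card G) ∨ Nat.card G = 1) := by
  classical
  have : Fintype G := Fintype.ofFinite G
  constructor
  · intro hcomp
    by_contra hcon
    push_neg at hcon
    obtain ⟨hnpp, hne1⟩ := hcon
    have hn0 : Nat.card G ≠ 0 := Nat.card_pos.ne'
    set p := (Nat.card G).minFac with hp
    have hpprime : p.Prime := Nat.minFac_prime hne1
    have hpdvd : p ∣ Nat.card G := Nat.minFac_dvd _
    rw [isPrimePow_iff_unique_prime_dvd] at hnpp
    simp only [ExistsUnique, not_exists, not_and, not_forall] at hnpp
    obtain ⟨q, hq1, hqne⟩ := hnpp p ⟨hpprime, hpdvd⟩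
    obtain ⟨hqprime, hqdvd⟩ := hq1
    haveI := Fact.mk hpprime
    haveI := Fact.mk hqprime
    obtain ⟨x, hx⟩ := exists_prime_orderOf_dvd_card p (by simpa using hpdvd)
    obtain ⟨y, hy⟩ := exists_prime_orderOf_dvd_card q (by simpa using hqdvd)
    have hxy : x ≠ y := fun h => hqne (by rw [← hx, ← hy, h])
    rcases hcomp x y hxy with h | h
    · have := orderOf_dvd_of_mem_zpowers h
      rw [hx, hy] at this
      exact hqne ((Nat.prime_dvd_prime_iff_eq hpprime hqprime).mp this).symm
    · have := orderOf_dvd_of_mem_zpowers h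
      rw [hx, hy] at this
      exact hqne ((Nat.prime_dvd_prime_iff_eq hqprime hpprime).mp this)
  · intro h x y hxy
    rcases h with h | h
    · obtain ⟨p, k, hpprime, hk0, hpk⟩ := (isPrimePow_nat_iff _).mp h
      have hx : orderOf x ∣ p ^ k := hpk ▸ orderOf_dvd_natCard x
      have hy : orderOf y ∣ p ^ k := hpk ▸ orderOf_dvd_natCard y
      obtain ⟨a, ha, hxa⟩ := (Nat.dvd_prime_pow hpprime).mp hx
      obtain ⟨b, hb, hyb⟩ := (Nat.dvd_prime_pow hpprime).mp hy
      rcases le_total a b with hab | hab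
      · exact Or.inl (mem_zpowers_of_orderOf_dvd (hxa ▸ hyb ▸ pow_dvd_pow p hab))
      · exact Or.inr (mem_zpowers_of_orderOf_dvd (hxa ▸ hyb ▸ pow_dvd_pow p hab))
    · have : Subsingleton G := (Nat.card_eq_one_iff_unique.mp h).1
      exact absurd (Subsingleton.elim x y) hxy
end

section
/- If in a finite group G the power graph equals the enhanced power graph, then every element of G has prime power order (G is an EPPO group). -/
theorem eppo_of_powerGraph_eq_enhanced {G : Type*} [Group G] [Finite G]
    (h : ∀ x y : G, x ≠ y →
      ((x ∈ Subgroup.zpowers y ∨ y ∈ Subgroup.zpowers x) ↔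
        IsCyclic (Subgroup.closure ({x, y} : Set G)))) :
    ∀ g : G, g ≠ 1 → IsPrimePow (orderOf g) := by
  intro g hg
  by_contra hnp
  set n := orderOf g with hn
  have hn0 : n ≠ 0 := (orderOf_pos g).ne'
  have hn1 : n ≠ 1 := by
    simpa [hn, orderOf_eq_one_iff] using hg
  obtain ⟨p, hp, hpn⟩ := Nat.exists_prime_and_dvd hn1
  rw [isPrimePow_iff_unique_prime_dvd] at hnp
  have hex : ∃ q, (Nat.Prime q ∧ q ∣ n) ∧ q ≠ p := by
    by_contra h'
    push_neg at h'
    exact hnp ⟨p, ⟨hp, hpn⟩, h'⟩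
  obtain ⟨q, ⟨hq, hqn⟩, hqp⟩ := hex
  -- elements of order p and q
  set x := g ^ (n / p) with hx
  set y := g ^ (n / q) with hy
  have hox : orderOf x = p := orderOf_pow_orderOf_div hn0 hpn
  have hoy : orderOf y = q := orderOf_pow_orderOf_div hn0 hqn
  have hxy : x ≠ y := fun e => hqp (by rw [← hox, e, hoy])
  -- closure {x, y} is cyclic
  have hsub : Subgroup.closure ({x, y} : Set G) ≤ Subgroup.zpowers g := by
    rw [Subgroup.closure_le]
    rintro z (rfl | rfl)
    · exact Subgroup.npow_mem_zpowers g (n / p)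
    · exact Subgroup.npow_mem_zpowers g (n / q)
  have hzc : IsCyclic (Subgroup.zpowers g) := by
    refine ⟨⟨⟨g, Subgroup.mem_zpowers g⟩, fun z => ?_⟩⟩
    obtain ⟨k, hk⟩ := Subgroup.mem_zpowers_iff.mp z.2
    exact ⟨k, Subtype.ext (by simpa using hk)⟩
  have hcyc : IsCyclic (Subgroup.closure ({x, y} : Set G)) :=
    Subgroup.isCyclic_of_le hsub
  have := (h x y hxy).mpr hcyc
  rcases this with hm | hm
  · have : p ∣ q := by
      rw [← hox, ← hoy]; exact orderOf_dvd_of_mem_zpowers hm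
    exact hqp ((Nat.prime_dvd_prime_iff_eq hp hq).mp this).symm
  · have : q ∣ p := by
      rw [← hoy, ← hox]; exact orderOf_dvd_of_mem_zpowers hm
    exact hqp ((Nat.prime_dvd_prime_iff_eq hq hp).mp this)
end

section
/- If G is a finite EPPO group (every element has prime power order), then the power graph of G equals the enhanced power graph of G. -/
private lemma mem_zpowers_pow_of_gcd_dvd {G : Type*} [Group G] (w : G) {a b : ℕ}
    (hab : Nat.gcd (orderOf w) a ∣ b) : w ^ b ∈ Subgroup.zpowers (w ^ a) := by
  -- first: w ^ gcd ∈ zpowers (w ^ a) via Bezout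
  have hgcd : w ^ Nat.gcd (orderOf w) a ∈ Subgroup.zpowers (w ^ a) := by
    refine ⟨Nat.gcdB (orderOf w) a, ?_⟩
    show (w ^ a : G) ^ Nat.gcdB (orderOf w) a = w ^ Nat.gcd (orderOf w) a
    have hb := Nat.gcd_eq_gcd_ab (orderOf w) a
    have : (w ^ a : G) ^ Nat.gcdB (orderOf w) a =
        w ^ ((orderOf w : ℤ) * Nat.gcdA (orderOf w) a + a * Nat.gcdB (orderOf w) a) := by
      rw [zpow_add, zpow_mul, zpow_mul, zpow_natCast, pow_orderOf_eq_one, one_zpow, one_mul,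
        zpow_natCast]
    rw [this, ← hb, zpow_natCast]
  obtain ⟨c, hc⟩ := hab
  rw [hc, pow_mul]
  exact Subgroup.pow_mem _ hgcd c

private lemma comparable_of_prime_pow {G : Type*} [Group G] (w : G)
    (hw : IsPrimePow (orderOf w)) (m n : ℕ) :
    w ^ m ∈ Subgroup.zpowers (w ^ n) ∨ w ^ n ∈ Subgroup.zpowers (w ^ m) := by
  obtain ⟨p, k, hp, hk, hpk⟩ := hw
  have hd : Nat.gcd (orderOf w) n ∣ p ^ k := hpk ▸ Nat.gcd_dvd_left _ _
  have he : Nat.gcd (orderOf w) m ∣ p ^ k := hpk ▸ Nat.gcd_dvd_left _ _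
  obtain ⟨i, hi, hdi⟩ := (Nat.dvd_prime_pow hp.nat_prime).mp hd
  obtain ⟨j, hj, hej⟩ := (Nat.dvd_prime_pow hp.nat_prime).mp he
  rcases le_total i j with hij | hij
  · refine Or.inl (mem_zpowers_pow_of_gcd_dvd w ?_)
    have : Nat.gcd (orderOf w) n ∣ Nat.gcd (orderOf w) m := by
      rw [hdi, hej]; exact pow_dvd_pow p hij
    exact this.trans (Nat.gcd_dvd_right _ _)
  · refine Or.inr (mem_zpowers_pow_of_gcd_dvd w ?_)
    have : Nat.gcd (orderOf w) m ∣ Nat.gcd (orderOf w) n := by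
      rw [hdi, hej]; exact pow_dvd_pow p hij
    exact this.trans (Nat.gcd_dvd_right _ _)

theorem powerGraph_eq_enhanced_of_eppo {G : Type*} [Group G] [Finite G]
    (h : ∀ g : G, g ≠ 1 → IsPrimePow (orderOf g)) :
    ∀ x y : G, x ≠ y →
      ((x ∈ Subgroup.zpowers y ∨ y ∈ Subgroup.zpowers x) ↔
        IsCyclic (Subgroup.closure ({x, y} : Set G))) := by
  intro x y hxy
  constructor
  · rintro (hx | hy)
    · have hcl : Subgroup.closure ({x, y} : Set G) = Subgroup.zpowers y := by
        apply le_antisymm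
        · rw [Subgroup.closure_le]
          intro z hz
          simp only [Set.mem_insert_iff, Set.mem_singleton_iff] at hz
          obtain rfl | rfl := hz
          · exact hx
          · exact Subgroup.mem_zpowers _
        · rw [Subgroup.zpowers_le]
          exact Subgroup.subset_closure (by simp)
      rw [hcl]
      exact ⟨⟨⟨y, Subgroup.mem_zpowers y⟩, by
        rintro ⟨z, k, rfl⟩
        exact ⟨k, Subtype.ext rfl⟩⟩⟩
    · have hcl : Subgroup.closure ({x, y} : Set G) = Subgroup.zpowers x := by
        apply le_antisymm
        · rw [Subgroup.closure_le]
          intro z hz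
          simp only [Set.mem_insert_iff, Set.mem_singleton_iff] at hz
          obtain rfl | rfl := hz
          · exact Subgroup.mem_zpowers _
          · exact hy
        · rw [Subgroup.zpowers_le]
          exact Subgroup.subset_closure (by simp)
      rw [hcl]
      exact ⟨⟨⟨x, Subgroup.mem_zpowers x⟩, by
        rintro ⟨z, k, rfl⟩
        exact ⟨k, Subtype.ext rfl⟩⟩⟩
  · intro hcyc
    set H := Subgroup.closure ({x, y} : Set G) with hH
    have hxH : x ∈ H := Subgroup.subset_closure (by simp)
    have hyH : y ∈ H := Subgroup.subset_closure (by simp)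
    obtain ⟨g, hg⟩ := hcyc.exists_generator
    set w : G := (g : G) with hw
    by_cases hw1 : w = 1
    · have hone : ∀ z : G, z ∈ H → z = 1 := by
        intro z hz
        obtain ⟨k, hk⟩ := hg ⟨z, hz⟩
        have : z = w ^ k := congrArg Subtype.val hk.symm
        rw [this, hw1, one_zpow]
      exact Or.inl (by rw [hone x hxH, hone y hyH]; exact Subgroup.one_mem _)
    · have hmem : ∀ z : G, z ∈ H → ∃ m : ℕ, z = w ^ m := by
        intro z hz
        have hz' : z ∈ Subgroup.zpowers w := by
          obtain ⟨k, hk⟩ := hg ⟨z, hz⟩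
          exact ⟨k, congrArg Subtype.val hk⟩
        rw [← mem_powers_iff_mem_zpowers] at hz'
        obtain ⟨m, hm⟩ := hz'
        exact ⟨m, hm.symm⟩
      obtain ⟨m, hm⟩ := hmem x hxH
      obtain ⟨n, hn⟩ := hmem y hyH
      rw [hm, hn]
      exact comparable_of_prime_pow w (h w hw1) m n
end

section
/- In a finite abelian p-group, every independent set is strongly independent; hence independence and strong independence coincide in abelian p-groups. -/
/-!
Write `V(K) = K/Kᵖ`, a vector space over `𝔽_p`. For `K = ⟨A⟩` with `A` independent, the images
of `A` in `V(K)` are linearly independent: a dependence puts some `a ∈ A` into `⟨A \ {a}⟩Kᵖ`,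
which is then all of `K`, and in a finite `p`-group this forces `⟨A \ {a}⟩ = K`. Hence
`p ^ |A| ≤ |V(K)|`. Since `|V(K)| = |K[p]|`, the size of `V` is monotone in `K`, and a generating
set `C` of `H ≥ K` spans `V(H)`, so `|V(H)| ≤ p ^ |C|`.
-/

def IsIndependent {G : Type*} [Group G] (A : Set G) : Prop :=
  ∀ a ∈ A, a ∉ Subgroup.closure (A \ {a})

open Subgroup

theorem IsPGroup.eq_top_of_sup_range_powMonoidHom_eq_top {p : ℕ} [Fact p.Prime] {K : Type*}
    [CommGroup K] [Finite K] (hK : IsPGroup p K) {L : Subgroup K}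
    (hL : L ⊔ (powMonoidHom p : K →* K).range = ⊤) : L = ⊤ := by
  have hsurj : Function.Surjective (powMonoidHom p : K ⧸ L →* K ⧸ L) := by
    intro q
    obtain ⟨x, rfl⟩ := QuotientGroup.mk_surjective q
    obtain ⟨y, hy, _, ⟨z, rfl⟩, rfl⟩ := mem_sup.1 (hL ▸ mem_top x)
    refine ⟨z, ?_⟩
    simp [(QuotientGroup.eq_one_iff y).2 hy]
  -- so `x ↦ xᵖ` is injective on the finite `p`-group `K ⧸ L`, which has no element of order `p`
  rw [← QuotientGroup.subsingleton_iff, ← not_nontrivial_iff_subsingleton]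
  intro _
  obtain ⟨x, hx⟩ := exists_prime_orderOf_dvd_card' p
    ((hK.to_quotient L).card_eq_or_dvd.resolve_left Finite.one_lt_card.ne')
  have hx1 : x = 1 := Finite.injective_iff_surjective.2 hsurj <| by
    simp [← hx, pow_orderOf_eq_one]
  exact (Fact.out : p.Prime).one_lt.ne' (by rw [← hx, hx1, orderOf_one])

/-- The multiplicative counterpart of `ModN`, written additively to carry its `ZMod p`-module
structure. -/
abbrev ModPow (K : Type*) [CommGroup K] (p : ℕ) : Type _ :=
  Additive (K ⧸ (powMonoidHom p : K →* K).range)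

namespace ModPow

variable {K : Type*} [CommGroup K] {p : ℕ}

instance : Module (ZMod p) (ModPow K p) :=
  AddCommGroup.zmodModule fun x => by
    obtain ⟨y, rfl⟩ := QuotientGroup.mk_surjective x.toMul
    exact (QuotientGroup.eq_one_iff _).2 ⟨y, rfl⟩

variable (p) in
def mk (x : K) : ModPow K p := Additive.ofMul (x : K ⧸ (powMonoidHom p : K →* K).range)

theorem mk_surjective : Function.Surjective (mk p : K → ModPow K p) :=
  QuotientGroup.mk_surjective

theorem mk_mem_span_image_iff {T : Set K} {x : K} :
    mk p x ∈ Submodule.span (ZMod p) (mk p '' T) ↔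
      x ∈ closure T ⊔ (powMonoidHom p : K →* K).range := by
  set N := (powMonoidHom p : K →* K).range
  set P : Submodule (ZMod p) (ModPow K p) := AddSubgroup.toZModSubmodule p
    (Subgroup.toAddSubgroup ((closure T ⊔ N).map (QuotientGroup.mk' N)))
  have mem_P (y : K) : mk p y ∈ P ↔ y ∈ closure T ⊔ N := by
    change y ∈ comap (QuotientGroup.mk' N) ((closure T ⊔ N).map (QuotientGroup.mk' N)) ↔ _
    rw [comap_map_eq, QuotientGroup.ker_mk', sup_assoc, sup_idem]
  suffices Submodule.span (ZMod p) (mk p '' T) = P by rw [this, mem_P]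
  refine le_antisymm (Submodule.span_le.2 ?_) fun z hz => ?_
  · rintro _ ⟨t, ht, rfl⟩
    exact (mem_P t).2 (mem_sup_left (subset_closure ht))
  obtain ⟨y, rfl⟩ := mk_surjective z
  obtain ⟨a, ha, b, ⟨c, rfl⟩, rfl⟩ := mem_sup.1 ((mem_P y).1 hz)
  have hb : mk p (powMonoidHom p c) = 0 := (QuotientGroup.eq_one_iff _).2 ⟨c, rfl⟩
  rw [show mk p (a * powMonoidHom p c) = mk p a + mk p (powMonoidHom p c) from rfl, hb, add_zero]
  clear hz
  induction ha using closure_induction with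
  | mem t ht => exact Submodule.subset_span ⟨t, ht, rfl⟩
  | one => exact zero_mem _
  | mul x y _ _ hx hy => exact add_mem hx hy
  | inv x _ hx => exact neg_mem hx

theorem card_eq_card_ker [Finite K] :
    Nat.card (ModPow K p) = Nat.card (powMonoidHom p : K →* K).ker := by
  have h1 := card_mul_index (powMonoidHom p : K →* K).range
  have h2 := card_mul_index (powMonoidHom p : K →* K).ker
  rw [index_ker, mul_comm] at h2
  rw [Nat.card_congr Additive.toMul, ← index_eq_card]
  exact Nat.eq_of_mul_eq_mul_left Nat.card_pos (h1.trans h2.symm)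

theorem card_le_of_injective {H : Type*} [CommGroup H] [Finite H] [Finite K] {f : K →* H}
    (hf : Function.Injective f) : Nat.card (ModPow K p) ≤ Nat.card (ModPow H p) := by
  rw [card_eq_card_ker, card_eq_card_ker, ← card_map_of_injective hf]
  refine card_le_of_le ?_
  rintro _ ⟨x, hx, rfl⟩
  simp only [SetLike.mem_coe, MonoidHom.mem_ker, powMonoidHom_apply] at hx ⊢
  rw [← map_pow, hx, map_one]

variable [Fact p.Prime] [Finite K]

theorem card_eq_pow_finrank :
    Nat.card (ModPow K p) = p ^ Module.finrank (ZMod p) (ModPow K p) := by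
  rw [Module.natCard_eq_pow_finrank (K := ZMod p), Nat.card_zmod]

theorem card_le_pow_of_closure_eq_top {S : Set K} (hS : closure S = ⊤) :
    Nat.card (ModPow K p) ≤ p ^ Nat.card S := by
  have := Fintype.ofFinite S
  have hspan : Submodule.span (ZMod p) (Set.range fun s : S => mk p (s : K)) = ⊤ := by
    refine Submodule.eq_top_iff'.2 fun z => ?_
    obtain ⟨x, rfl⟩ := mk_surjective z
    rw [← Set.image_eq_range, mk_mem_span_image_iff, hS, top_sup_eq]
    exact mem_top x
  rw [card_eq_pow_finrank, Nat.card_eq_fintype_card]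
  refine Nat.pow_le_pow_right (Fact.out : p.Prime).pos ?_
  rw [← finrank_top, ← hspan]
  exact finrank_range_le_card _

theorem linearIndependent_mk_of_isIndependent (hK : IsPGroup p K) {S : Set K}
    (hS : closure S = ⊤) (hind : IsIndependent S) :
    LinearIndependent (ZMod p) (fun s : S => mk p (s : K)) := by
  rw [linearIndependent_iff_notMem_span]
  rintro ⟨a, ha⟩ hspan
  rw [← Set.image_image (mk p) Subtype.val, Set.image_sdiff Subtype.val_injective, Set.image_univ,
    Subtype.range_coe, Set.image_singleton, mk_mem_span_image_iff] at hspan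
  have hsup : closure (S \ {a}) ⊔ (powMonoidHom p : K →* K).range = ⊤ := by
    refine eq_top_iff.2 (hS ▸ (closure_le _).2 fun s hs => ?_)
    by_cases hsa : s = a
    · exact hsa ▸ hspan
    · exact mem_sup_left (subset_closure ⟨hs, hsa⟩)
  exact hind a ha (hK.eq_top_of_sup_range_powMonoidHom_eq_top hsup ▸ mem_top a)

theorem pow_card_le_card_of_isIndependent (hK : IsPGroup p K) {S : Set K}
    (hS : closure S = ⊤) (hind : IsIndependent S) :
    p ^ Nat.card S ≤ Nat.card (ModPow K p) := by
  have := Fintype.ofFinite S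
  rw [card_eq_pow_finrank, Nat.card_eq_fintype_card]
  exact Nat.pow_le_pow_right (Fact.out : p.Prime).pos
    (linearIndependent_mk_of_isIndependent hK hS hind).fintype_card_le_finrank

end ModPow

theorem IsIndependent.preimage {G K : Type*} [Group G] [Group K] {A : Set G}
    (hA : IsIndependent A) {f : K →* G} (hf : Function.Injective f) :
    IsIndependent (f ⁻¹' A) := by
  intro a ha hmem
  refine hA (f a) ha (closure_mono ?_ (MonoidHom.map_closure f _ ▸ mem_map_of_mem f hmem))
  rintro _ ⟨x, ⟨hx, hxa⟩, rfl⟩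
  exact ⟨hx, fun h => hxa (hf h)⟩

theorem Subgroup.natCard_coe_preimage_closure {G : Type*} [Group G] (s : Set G) :
    Nat.card (((↑) : closure s → G) ⁻¹' s) = Nat.card s := by
  rw [Nat.card_coe_set_eq, Nat.card_coe_set_eq,
    Set.ncard_preimage_of_injective_subset_range Subtype.val_injective
      (Subtype.range_coe (s := (closure s : Set G)) ▸ subset_closure)]

theorem stronglyIndependent_of_independent_abelian_pGroup
    {G : Type*} [CommGroup G] [Finite G] (p : ℕ) (hp : p.Prime)
    (hG : IsPGroup p G) (A : Finset G) (hA : IsIndependent (A : Set G)) :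
    IsStronglyIndependent A := by
  have := Fact.mk hp
  intro H hAH C hC
  subst hC
  have hA_le := ModPow.pow_card_le_card_of_isIndependent (hG.to_subgroup _)
    closure_closure_coe_preimage (hA.preimage (closure (A : Set G)).subtype_injective)
  have hC_ge := ModPow.card_le_pow_of_closure_eq_top (p := p)
    (closure_closure_coe_preimage (k := (C : Set G)))
  have hmono := ModPow.card_le_of_injective (p := p) (inclusion_injective ((closure_le _).2 hAH))
  rw [natCard_coe_preimage_closure, Nat.card_coe_set_eq, Set.ncard_coe_finset] at hA_le hC_ge
  exact (Nat.pow_le_pow_iff_right hp.one_lt).1 (hA_le.trans (hmono.trans hC_ge))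
end

section
/- The three 3-cycles (1,2,3), (1,2,4), (1,2,5) form an independent set of size 3 in the alternating group A_5. -/
theorem isIndependent_of_forall_exists_moved_fixed {G X : Type*} [Group G] [MulAction G X]
    {A : Set G} (h : ∀ a ∈ A, ∃ x : X, a • x ≠ x ∧ ∀ b ∈ A, b ≠ a → b • x = x) :
    IsIndependent A := by
  intro a ha hmem
  obtain ⟨x, hmoved, hfixed⟩ := h a ha
  have hle : Subgroup.closure (A \ {a}) ≤ MulAction.stabilizer G x :=
    (Subgroup.closure_le _).2 fun b ⟨hb, hne⟩ => hfixed b hb hne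
  exact hmoved (hle hmem)

theorem A5_three_cycles_independent :
    let c₁ : Equiv.Perm (Fin 5) := Equiv.swap 0 2 * Equiv.swap 0 1  -- (0 1 2)
    let c₂ : Equiv.Perm (Fin 5) := Equiv.swap 0 3 * Equiv.swap 0 1  -- (0 1 3)
    let c₃ : Equiv.Perm (Fin 5) := Equiv.swap 0 4 * Equiv.swap 0 1  -- (0 1 4)
    ({c₁, c₂, c₃} : Set (Equiv.Perm (Fin 5))) ⊆ alternatingGroup (Fin 5) ∧
    IsIndependent ({c₁, c₂, c₃} : Set (Equiv.Perm (Fin 5))) ∧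
    ({c₁, c₂, c₃} : Set (Equiv.Perm (Fin 5))).ncard = 3 := by
  intro c₁ c₂ c₃
  have h_three_cycle {k : Fin 5} (hk : 2 ≤ k) :
      (Equiv.swap 0 k * Equiv.swap 0 1).IsThreeCycle :=
    Equiv.Perm.isThreeCycle_swap_mul_swap_same (by omega) (by omega) (by omega)
  refine ⟨?_, isIndependent_of_forall_exists_moved_fixed (X := Fin 5) ?_, ?_⟩
  · simp only [Set.insert_subset_iff, Set.singleton_subset_iff, SetLike.mem_coe]
    refine ⟨?_, ?_, ?_⟩ <;> exact (h_three_cycle (by decide)).mem_alternatingGroup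
  · -- `cᵢ` is the only one of the three that moves the point `i + 1`
    simp only [Set.mem_insert_iff, Set.mem_singleton_iff, forall_eq_or_imp, forall_eq]
    decide
  · exact Set.ncard_eq_three.2 ⟨c₁, c₂, c₃, by decide, by decide, by decide, rfl⟩
end
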